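/- Let Y be a vertex of a directed acyclic graph G on a finite vertex set and let U ⊆ An(Y,G). Let D be a vertex set with topological ordering (D_1,…,D_E), E ≥ 1, such that Ch(D′,G) ∩ An(U,G) ⊆ D for every D′ ∈ D, and let S ⊆ An(U,G) be a set with De(D′,G) ∩ S ≠ ∅ for every D′ ∈ D. Let D_e ∈ D ∖ U, let (D_{e_1},…,D_{e_f}), f ≥ 1, be the topological ordering of Ch(D_e,G) ∩ D, and set D_{e_0} := D_e. Suppose that (I) D_e is not d-separated from S given (Pa(D_{e_f},G) ∪ {D_{e_f}}) ∖ {D_e}, or (II) there exists t ∈ {1,…,f} such that (1) D_{e_{t−1}} ∉ Pa(D_{e_t},G), or (2) Pa(D_{e_t},G) is not a subset of Pa(D_{e_{t−1}},G) ∪ {D_{e_{t−1}}}, or (3) Pa(D_{e_{t−1}},G) ∖ Pa(D_{e_t},G) is not d-separated from S given Pa(D_{e_t},G). Then one of the following graphical configurations holds in G: (a) D_{e_m} and D_{e_h} are not adjacent for some m ≠ h; (b) for some h ∈ {1,…,f} there is a vertex B_i ≠ D_e with D_e → D_{e_h} ← B_i in G and B_i ∉ Adj(D_e,G); (c) for some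 h ∈ {1,…,f} there is B_i ∈ Pa(D_e,G) ∖ Pa(D_{e_h},G) and a path p from B_i to some S′ ∈ S that is d-connecting given Pa(D_{e_h},G) (if B_i ∈ S then B_i = S′ and p has length 0). -/
import Mathlib


open scoped Classical

noncomputable section

namespace Causal

/-- A directed graph on vertex type `V`, given by its edge relation. -/
structure Digraph (V : Type) where
  Edge : V → V → Prop

namespace Digraph

variable {V : Type}

/-- A directed graph is acyclic if there is no directed cycle. -/
def Acyclic (G : Digraph V) : Prop := ∀ v, ¬ Relation.TransGen G.Edge v v

/-- `G.anc u v` : `u` is an ancestor of `v` (`u ↦ v`), i.e. `u = v` or there is a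
directed path from `u` to `v`. -/
def anc (G : Digraph V) (u v : V) : Prop := Relation.ReflTransGen G.Edge u v

/-- Parents of a vertex. -/
def paSet (G : Digraph V) (v : V) : Set V := {u | G.Edge u v}

/-- Children of a vertex. -/
def chSet (G : Digraph V) (v : V) : Set V := {u | G.Edge v u}

/-- Adjacent vertices. -/
def adjSet (G : Digraph V) (v : V) : Set V := G.paSet v ∪ G.chSet v

/-- Ancestors of a vertex (including itself). -/
def anSet (G : Digraph V) (v : V) : Set V := {u | G.anc u v}

/-- Descendants of a vertex (including itself). -/
def deSet (G : Digraph V) (v : V) : Set V := {u | G.anc v u}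

/-- Parents of a set of vertices. -/
def paOf (G : Digraph V) (S : Set V) : Set V := ⋃ v ∈ S, G.paSet v

/-- Ancestors of a set of vertices. -/
def anOf (G : Digraph V) (S : Set V) : Set V := ⋃ v ∈ S, G.anSet v

/-- Descendants of a set of vertices. -/
def deOf (G : Digraph V) (S : Set V) : Set V := ⋃ v ∈ S, G.deSet v

/-- A path in `G` : a sequence of `n+1` distinct vertices, consecutive ones joined by an
edge of `G` in either direction.  Paths in the usual sense have `1 ≤ n`; `n = 0` is the
degenerate one-vertex path. -/
structure GPath (G : Digraph V) where
  n : ℕ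
  vert : ℕ → V
  inj : ∀ i j, i ≤ n → j ≤ n → vert i = vert j → i = j
  adj : ∀ i, i < n → G.Edge (vert i) (vert (i + 1)) ∨ G.Edge (vert (i + 1)) (vert i)

namespace GPath

variable {G : Digraph V}

/-- First vertex of a path. -/
def first (p : G.GPath) : V := p.vert 0

/-- Last vertex of a path. -/
def last (p : G.GPath) : V := p.vert p.n

/-- `v` lies on the path `p`. -/
def Mem (p : G.GPath) (v : V) : Prop := ∃ i, i ≤ p.n ∧ p.vert i = v

/-- The (interior) vertex at position `i` of `p` is a collider: both incident edges on the
path point into it. -/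
def IsCollider (p : G.GPath) (i : ℕ) : Prop :=
  0 < i ∧ i < p.n ∧ G.Edge (p.vert (i - 1)) (p.vert i) ∧ G.Edge (p.vert (i + 1)) (p.vert i)

/-- A path is causal if all edges point towards its last vertex. -/
def Causal (p : G.GPath) : Prop := ∀ i, i < p.n → G.Edge (p.vert i) (p.vert (i + 1))

/-- A path is blocked by `C` if some non-collider on it lies in `C`, or some collider on it
is not an ancestor of `C`. -/
def Blocked (p : G.GPath) (C : Set V) : Prop :=
  (∃ i, 0 < i ∧ i < p.n ∧ ¬ p.IsCollider i ∧ p.vert i ∈ C) ∨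
  (∃ i, p.IsCollider i ∧ p.vert i ∉ G.anOf C)

end GPath

/-- d-separation: every path between a vertex of `S \ C` and a vertex of `T \ C` is blocked
by `C`.  It holds by convention when `S \ C` or `T \ C` is empty. -/
def dsep (G : Digraph V) (S T C : Set V) : Prop :=
  ∀ s ∈ S \ C, ∀ t ∈ T \ C, ∀ p : G.GPath,
    1 ≤ p.n → p.first = s → p.last = t → p.Blocked C

/-- `l` is a topological ordering of the vertex set `S` : it enumerates `S` without
repetitions so that no later vertex is an ancestor of an earlier one. -/
def IsTopoOrd (G : Digraph V) (S : Set V) (l : List V) : Prop :=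
  l.Nodup ∧ (∀ v, v ∈ l ↔ v ∈ S) ∧ l.Pairwise fun a b => ¬ G.anc b a

/-- There is a directed path from `u` to `v` avoiding the vertex `A` (a trivial such path
when `u = v`). -/
def AvoidReach (G : Digraph V) (A u v : V) : Prop :=
  Relation.ReflTransGen (fun a b => G.Edge a b ∧ a ≠ A ∧ b ≠ A) u v

/-- `N(G)` : non-ancestors of the outcome `Y`. -/
def Nset (G : Digraph V) (A Y : V) : Set V := {v | ¬ G.anc v Y}

/-- `I(G)` : indirect ancestors of `Y`, i.e. vertices `v ≠ A` that are ancestors of `Y`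
such that every directed path from `v` to `Y` contains `A`. -/
def Iset (G : Digraph V) (A Y : V) : Set V :=
  {v | v ≠ A ∧ G.anc v Y ∧ ¬ G.AvoidReach A v Y}

/-- `W(G)` : baseline covariates. -/
def Wset (G : Digraph V) (A Y : V) : Set V :=
  {v | ¬ G.anc A v ∧ G.anc v Y ∧ v ∉ G.Iset A Y}

/-- `M(G)` : mediators (including `Y`). -/
def Mset (G : Digraph V) (A Y : V) : Set V := {v | v ≠ A ∧ G.anc A v ∧ G.anc v Y}

/-- `O(G)` : the optimal adjustment set. -/
def Oset (G : Digraph V) (A Y : V) : Set V := G.paOf (G.Mset A Y) \ (G.Mset A Y ∪ {A})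

/-- `O_min(G)` : the inclusion-minimal subset `O' ⊆ O(G)` with `A ⫫ O(G) \ O' | O'`
(realized as the intersection of all such subsets). -/
def Omin (G : Digraph V) (A Y : V) : Set V :=
  ⋂₀ {O' | O' ⊆ G.Oset A Y ∧ G.dsep {A} (G.Oset A Y \ O') O'}

end Digraph

/-- `chainD Wj l t` : the `t`-th element of the chain `(W_{j_0} = Wj, W_{j_1}, …, W_{j_r})`
where `l = [W_{j_1}, …, W_{j_r}]`. -/
def chainD {V : Type} (Wj : V) (l : List V) (t : ℕ) : V := (Wj :: l).getD t Wj

namespace Digraph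

variable {V : Type}

/-- The W-criterion for a vertex `Wj ∈ W(G) \ O(G)`. -/
def WCrit (G : Digraph V) (A Y Wj : V) : Prop :=
  ∀ l : List V, G.IsTopoOrd (G.chSet Wj ∩ G.Wset A Y) l →
    l ≠ [] ∧
      G.dsep {Wj} (G.Oset A Y)
        (insert (chainD Wj l l.length) (G.paSet (chainD Wj l l.length)) \ {Wj}) ∧
      ∀ t, t < l.length →
        G.Edge (chainD Wj l t) (chainD Wj l (t + 1)) ∧
        G.paSet (chainD Wj l (t + 1)) ⊆ insert (chainD Wj l t) (G.paSet (chainD Wj l t)) ∧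
        G.dsep (G.paSet (chainD Wj l t) \ G.paSet (chainD Wj l (t + 1))) (G.Oset A Y)
          (G.paSet (chainD Wj l (t + 1)))

/-- The M-criterion for a vertex `Mi ∈ M(G) \ {Y}`. -/
def MCrit (G : Digraph V) (A Y Mi : V) : Prop :=
  ∀ l : List V, G.IsTopoOrd (G.chSet Mi ∩ G.Mset A Y) l →
    l ≠ [] ∧
      G.dsep {Mi} (insert A (insert Y (G.Omin A Y)))
        (insert (chainD Mi l l.length) (G.paSet (chainD Mi l l.length)) \ {Mi}) ∧
      ∀ t, t < l.length →
        G.Edge (chainD Mi l t) (chainD Mi l (t + 1)) ∧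
        G.paSet (chainD Mi l (t + 1)) ⊆ insert (chainD Mi l t) (G.paSet (chainD Mi l t)) ∧
        G.dsep (G.paSet (chainD Mi l t) \ G.paSet (chainD Mi l (t + 1)))
          (insert A (insert Y (G.Omin A Y))) (G.paSet (chainD Mi l (t + 1)))

/-- `V*(G)` : the irreducible informative vertex set. -/
def Vstar (G : Digraph V) (A Y : V) : Set V :=
  insert A (insert Y (G.Oset A Y ∪
    {w | w ∈ G.Wset A Y ∧ w ∉ G.Oset A Y ∧ ¬ G.WCrit A Y w} ∪
    {m | m ∈ G.Mset A Y ∧ m ≠ Y ∧ ¬ G.MCrit A Y m}))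

/-- The projection `G_{−v,π}` : saturate all edges from `Pa(v,G) ∪ {v, π_1, …, π_{j−1}}`
into `π_j`, then delete `v` and its incident edges. -/
def proj (G : Digraph V) (v : V) (π : List V) : Digraph V where
  Edge a b :=
    a ≠ v ∧ b ≠ v ∧
      (G.Edge a b ∨ ∃ j, j < π.length ∧ b = π.getD j v ∧
        (G.Edge a v ∨ ∃ j', j' < j ∧ a = π.getD j' v))

/-- There is a directed path from `u` to `v` all of whose non-endpoint vertices lie
in `I` (this includes a plain edge `u → v`). -/
def connVia (G : Digraph V) (I : Set V) (u v : V) : Prop :=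
  ∃ w, Relation.ReflTransGen (fun a b => G.Edge a b ∧ b ∈ I) u w ∧ G.Edge w v

/-- The reduced graph `G⁰` on `V⁰ = V \ (N(G) ∪ I(G))` : connect across `I(G)` and delete
the vertices of `N(G) ∪ I(G)`. -/
def reduce0 (G : Digraph V) (A Y : V) : Digraph V where
  Edge u v :=
    u ∉ G.Nset A Y ∪ G.Iset A Y ∧ v ∉ G.Nset A Y ∪ G.Iset A Y ∧
      G.connVia (G.Iset A Y) u v

/-- The induced subgraph on a vertex set `S`. -/
def induce (G : Digraph V) (S : Set V) : Digraph {v // v ∈ S} where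
  Edge a b := G.Edge a.1 b.1

/-- `π` is the projection ordering used when projecting `v` out of the current graph `H`
(vertex classes taken with respect to the reference graph `Gref`): for `v ∈ W(Gref)` it is a
topological ordering of the children of `v` in `H` lying in `W(Gref)`, followed by `A` if `A`
is a child of `v` in `H`; for `v ∈ M(Gref)` it is a topological ordering of all children
of `v` in `H`. -/
def PiOrd (Gref : Digraph V) (A Y : V) (H : Digraph V) (v : V) (π : List V) : Prop :=
  (v ∈ Gref.Wset A Y ∧
    ∃ l, H.IsTopoOrd (H.chSet v ∩ Gref.Wset A Y) l ∧
      π = l ++ if H.Edge v A then [A] else []) ∨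
  (v ∈ Gref.Mset A Y ∧ H.IsTopoOrd (H.chSet v) π)

/-- One step of the graph-reduction algorithm: visit `v` in the current graph `H`; if `v`
satisfies the W- (resp. M-) criterion in `G` it is projected out, otherwise nothing happens. -/
def AlgStep (G : Digraph V) (A Y : V) (H : Digraph V) (v : V) (H' : Digraph V) : Prop :=
  (v ∈ G.Wset A Y ∧ G.WCrit A Y v ∧
    ∃ l, H.IsTopoOrd (H.chSet v ∩ G.Wset A Y) l ∧
      H' = H.proj v (l ++ if H.Edge v A then [A] else [])) ∨
  (v ∈ G.Mset A Y ∧ G.MCrit A Y v ∧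
    ∃ l, H.IsTopoOrd (H.chSet v) l ∧ H' = H.proj v l) ∨
  (¬ (v ∈ G.Wset A Y ∧ G.WCrit A Y v) ∧ ¬ (v ∈ G.Mset A Y ∧ G.MCrit A Y v) ∧ H' = H)

/-- A run of the graph-reduction algorithm through the list of vertices `l`. -/
inductive AlgRun (G : Digraph V) (A Y : V) : Digraph V → List V → Digraph V → Prop
  | nil (H : Digraph V) : AlgRun G A Y H [] H
  | cons {H H' H'' : Digraph V} {v : V} {l : List V} :
      G.AlgStep A Y H v H' → AlgRun G A Y H' l H'' → AlgRun G A Y H (v :: l) H''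

/-- `H` is an output of the graph-reduction algorithm applied to `G` : starting from the
reduced graph `G⁰`, visit each vertex of `V⁰ \ ({A,Y} ∪ O(G))` exactly once, in any order. -/
def IsAlgOutput (G : Digraph V) (A Y : V) (H : Digraph V) : Prop :=
  ∃ l : List V, l.Nodup ∧
    (∀ v, v ∈ l ↔ (v ∉ G.Nset A Y ∪ G.Iset A Y ∧ v ∉ insert A (insert Y (G.Oset A Y)))) ∧
    G.AlgRun A Y (G.reduce0 A Y) l H

/-- Markov equivalence: same adjacencies and the same unshielded colliders. -/
def MarkovEquiv (G G' : Digraph V) : Prop :=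
  (∀ u v, u ∈ G.adjSet v ↔ u ∈ G'.adjSet v) ∧
  ∀ u w v, (G.Edge u w ∧ G.Edge v w ∧ u ≠ v ∧ u ∉ G.adjSet v) ↔
    (G'.Edge u w ∧ G'.Edge v w ∧ u ≠ v ∧ u ∉ G'.adjSet v)

end Digraph

/-- `p` is a shortest causal path from `v` to the set `S` (of length `0` if `v ∈ S`). -/
def IsShortestCausalTo {V : Type} (G : Digraph V) (p : G.GPath) (v : V) (S : Set V) : Prop :=
  p.Causal ∧ p.first = v ∧ p.last ∈ S ∧
    ∀ q : G.GPath, q.Causal → q.first = v → q.last ∈ S → p.n ≤ q.n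

/-- Length of a shortest causal path from `v` to the set `D`. -/
def causalDist {V : Type} (G : Digraph V) (v : V) (D : Set V) : ℕ :=
  sInf {n | ∃ q : G.GPath, q.Causal ∧ q.first = v ∧ q.last ∈ D ∧ q.n = n}

/-- The distance-to-`D` of a path: the sum over its colliders `C_h` of `|c_h| + 1`, where
`c_h` is a shortest causal path from `C_h` to `D`. -/
def Digraph.GPath.distTo {V : Type} {G : Digraph V} (p : G.GPath) (D : Set V) : ℕ :=
  ∑ i ∈ Finset.range (p.n + 1),
    if p.IsCollider i then causalDist G (p.vert i) D + 1 else 0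

/-- A `Fintype` instance for subtypes of sets over a finite type. -/
noncomputable instance instFintypeMemSet {α : Type} [Finite α] (S : Set α) :
    Fintype {x // x ∈ S} := Set.Finite.fintype (Set.toFinite S)

namespace Digraph
variable {V : Type}

-- ================= auxiliary lemmas =================

lemma Acyclic.not_anc_of_edge {G : Digraph V} (hG : G.Acyclic) {u v : V}
    (h : G.Edge u v) : ¬ G.anc v u :=
  fun h2 => hG v (Relation.TransGen.tail' h2 h)

lemma Acyclic.edge_irrefl {G : Digraph V} (hG : G.Acyclic) {u : V} (h : G.Edge u u) : False :=
  hG.not_anc_of_edge h Relation.ReflTransGen.refl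

lemma Acyclic.ne_of_edge {G : Digraph V} (hG : G.Acyclic) {u v : V} (h : G.Edge u v) : u ≠ v :=
  fun e => hG.edge_irrefl (e ▸ h)

lemma mem_anOf {G : Digraph V} {S : Set V} {x : V} :
    x ∈ G.anOf S ↔ ∃ s ∈ S, G.anc x s := by
  simp [anOf, anSet]

lemma anOf_closed {G : Digraph V} {S : Set V} {x y : V} (h : G.anc x y)
    (hy : y ∈ G.anOf S) : x ∈ G.anOf S := by
  rw [mem_anOf] at hy ⊢
  obtain ⟨s, hs, hanc⟩ := hy
  exact ⟨s, hs, h.trans hanc⟩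

namespace GPath
variable {G : Digraph V}

def drop (p : G.GPath) (k : ℕ) (hk : k ≤ p.n) : G.GPath where
  n := p.n - k
  vert i := p.vert (i + k)
  inj i j hi hj h := by
    have := p.inj (i + k) (j + k) (by omega) (by omega) h; omega
  adj i hi := by
    have h' : i + 1 + k = i + k + 1 := by omega
    rw [h']
    exact p.adj (i + k) (by omega)

lemma drop_isCollider (p : G.GPath) (k : ℕ) (hk : k ≤ p.n) (i : ℕ) (hi : 0 < i) :
    (p.drop k hk).IsCollider i ↔ p.IsCollider (i + k) := by
  have e1 : i - 1 + k = i + k - 1 := by omega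
  have e2 : i + 1 + k = i + k + 1 := by omega
  simp only [IsCollider, drop, e1, e2]
  constructor
  · rintro ⟨h1, h2, h3, h4⟩; exact ⟨by omega, by omega, h3, h4⟩
  · rintro ⟨h1, h2, h3, h4⟩; exact ⟨by omega, by omega, h3, h4⟩

lemma causal_anc_first (p : G.GPath) (hc : p.Causal) {i : ℕ} (hi : i ≤ p.n) :
    G.anc (p.vert 0) (p.vert i) := by
  induction i with
  | zero => exact Relation.ReflTransGen.refl
  | succ m ih => exact (ih (by omega)).tail (hc m (by omega))

lemma causal_not_blocked {G : Digraph V} (hG : G.Acyclic) (p : G.GPath) (hc : p.Causal)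
    (C : Set V) (h : ∀ i, 0 < i → i < p.n → p.vert i ∉ C) : ¬ p.Blocked C := by
  rintro (⟨i, h1, h2, _, h4⟩ | ⟨i, ⟨h1, h2, _, h4⟩, _⟩)
  · exact h i h1 h2 h4
  · exact hG _ (Relation.TransGen.tail (Relation.TransGen.single (hc i h2)) h4)

def cons (p : G.GPath) (B : V) (hB : ∀ i, i ≤ p.n → p.vert i ≠ B)
    (e : G.Edge B (p.vert 0)) : G.GPath where
  n := p.n + 1
  vert i := if i = 0 then B else p.vert (i - 1)
  inj i j hi hj h := by
    rcases Nat.eq_zero_or_pos i with h0 | h0 <;> rcases Nat.eq_zero_or_pos j with h1 | h1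
    · omega
    · subst h0; simp only [if_pos rfl, if_neg (by omega : ¬ j = 0)] at h
      exact absurd h.symm (hB (j-1) (by omega))
    · subst h1; simp only [if_pos rfl, if_neg (by omega : ¬ i = 0)] at h
      exact absurd h (hB (i-1) (by omega))
    · simp only [if_neg (by omega : ¬ i = 0), if_neg (by omega : ¬ j = 0)] at h
      have := p.inj (i-1) (j-1) (by omega) (by omega) h; omega
  adj i hi := by
    rcases Nat.eq_zero_or_pos i with h0 | h0
    · subst h0; simpa using Or.inl e
    · simp only [if_neg (by omega : ¬ i = 0), if_neg (by omega : ¬ i + 1 = 0)]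
      have e' : i + 1 - 1 = i - 1 + 1 := by omega
      rw [e']
      exact p.adj (i-1) (by omega)

lemma cons_causal (p : G.GPath) (B : V) (hB : ∀ i, i ≤ p.n → p.vert i ≠ B)
    (e : G.Edge B (p.vert 0)) (hc : p.Causal) : (p.cons B hB e).Causal := by
  intro i hi
  rcases Nat.eq_zero_or_pos i with h0 | h0
  · subst h0; simpa [cons] using e
  · simp only [cons, if_neg (by omega : ¬ i = 0), if_neg (by omega : ¬ i + 1 = 0)]
    have e' : i + 1 - 1 = i - 1 + 1 := by omega
    rw [e']
    exact hc (i-1) (by simp only [cons] at hi; omega)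

end GPath


lemma exists_walk {G : Digraph V} {u v : V} (h : G.anc u v) :
    ∃ n, ∃ f : ℕ → V, f 0 = u ∧ f n = v ∧ ∀ i, i < n → G.Edge (f i) (f (i+1)) := by
  induction h with
  | refl => exact ⟨0, fun _ => u, rfl, rfl, fun i hi => absurd hi (by omega)⟩
  | @tail b c hab hbc ih =>
    obtain ⟨n, f, hf0, hfn, hfe⟩ := ih
    refine ⟨n + 1, fun i => if i ≤ n then f i else c, by simp [hf0], by simp, ?_⟩
    intro i hi
    by_cases hin : i < n
    · simp only [if_pos (by omega : i ≤ n), if_pos (by omega : i + 1 ≤ n)]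
      exact hfe i hin
    · have hin' : i = n := by omega
      subst hin'
      simp only [if_pos le_rfl, if_neg (by omega : ¬ i + 1 ≤ i), hfn]
      exact hbc

/-- From `anc u v` obtain a causal `GPath` from `u` to `v`. -/
lemma exists_causal_gpath {G : Digraph V} {u v : V} (h : G.anc u v) :
    ∃ p : G.GPath, p.Causal ∧ p.first = u ∧ p.last = v := by
  classical
  set W : Set ℕ :=
    {n | ∃ f : ℕ → V, f 0 = u ∧ f n = v ∧ ∀ i, i < n → G.Edge (f i) (f (i+1))} with hW
  have hne : W.Nonempty := by
    obtain ⟨n, f, h1, h2, h3⟩ := exists_walk h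
    exact ⟨n, f, h1, h2, h3⟩
  set n₀ := sInf W with hn₀
  obtain ⟨f, hf0, hfn, hfe⟩ : n₀ ∈ W := Nat.sInf_mem hne
  have key : ∀ i j, i < j → j ≤ n₀ → f i = f j → False := by
    intro i j hij hj hfeq
    have hmem : n₀ - (j - i) ∈ W := by
      refine ⟨fun k => if k ≤ i then f k else f (k + (j - i)), by simp [hf0], ?_, ?_⟩
      · by_cases hend : n₀ - (j - i) ≤ i
        · have hji : j = n₀ := by omega
          have heq : n₀ - (j - i) = i := by omega
          simp only [heq, if_pos le_rfl, hfeq]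
          rw [hji, hfn]
        · simp only [if_neg hend]
          rw [← hfn]; congr 1; omega
      · intro k hk
        by_cases h1 : k + 1 ≤ i
        · simp only [if_pos (by omega : k ≤ i), if_pos h1]
          exact hfe k (by omega)
        · by_cases h2 : k ≤ i
          · simp only [if_pos h2, if_neg h1]
            have e1 : k + 1 + (j - i) = j + 1 := by omega
            have e2 : f k = f j := by rw [show k = i by omega, hfeq]
            rw [e1, e2]
            exact hfe j (by omega)
          · simp only [if_neg h2, if_neg (by omega : ¬ k + 1 ≤ i)]
            have e1 : k + 1 + (j - i) = k + (j - i) + 1 := by omega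
            rw [e1]
            exact hfe (k + (j - i)) (by omega)
    have := Nat.sInf_le hmem
    omega
  have hinj : ∀ i j, i ≤ n₀ → j ≤ n₀ → f i = f j → i = j := by
    intro i j hi hj hfeq
    rcases Nat.lt_trichotomy i j with hij | hij | hij
    · exact absurd (key i j hij hj hfeq) not_false
    · exact hij
    · exact absurd (key j i hij hi hfeq.symm) not_false
  exact ⟨⟨n₀, f, hinj, fun i hi => Or.inl (hfe i hi)⟩, fun i hi => hfe i hi, hf0, hfn⟩


lemma GPath.forward_endpoint {G : Digraph V} (p : G.GPath) :
    ∀ i, 0 < i → i ≤ p.n → G.Edge (p.vert (i-1)) (p.vert i) →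
      G.anc (p.vert i) p.last ∨ ∃ j, p.IsCollider j ∧ G.anc (p.vert i) (p.vert j) := by
  have H : ∀ m i, p.n - i = m → 0 < i → i ≤ p.n → G.Edge (p.vert (i-1)) (p.vert i) →
      G.anc (p.vert i) p.last ∨ ∃ j, p.IsCollider j ∧ G.anc (p.vert i) (p.vert j) := by
    intro m
    induction m using Nat.strong_induction_on with
    | _ m ih =>
      intro i hm hi hin he
      rcases eq_or_lt_of_le hin with heq | hlt
      · left
        show G.anc (p.vert i) (p.vert p.n)
        rw [heq]
        exact Relation.ReflTransGen.refl
      · rcases p.adj i hlt with hfw | hb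
        · have hrec := ih (p.n - (i+1)) (by omega) (i+1) rfl (by omega) (by omega)
            (by simpa using hfw)
          rcases hrec with h1 | ⟨j, hj, h2⟩
          · left; exact Relation.ReflTransGen.head hfw h1
          · right; exact ⟨j, hj, Relation.ReflTransGen.head hfw h2⟩
        · right; exact ⟨i, ⟨hi, hlt, he, hb⟩, Relation.ReflTransGen.refl⟩
  exact fun i => H (p.n - i) i rfl

lemma topo_not_anc {G : Digraph V} {S : Set V} {l : List V} (h : G.IsTopoOrd S l)
    {d : V} {i j : ℕ} (hij : i < j) (hj : j < l.length) :
    ¬ G.anc (l.getD j d) (l.getD i d) := by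
  have hp := h.2.2
  rw [List.pairwise_iff_getElem] at hp
  have := hp i j (by omega) hj hij
  rwa [List.getD_eq_getElem l d (by omega : i < l.length), List.getD_eq_getElem l d hj]

lemma topo_getD_mem {l : List V} {d : V} {i : ℕ} (hi : i < l.length) : l.getD i d ∈ l := by
  rw [List.getD_eq_getElem l d hi]; exact List.getElem_mem _

end Digraph

end Causal

open Causal in
/-- The general graphical lemma behind the completeness of the W- and
M-criteria: if the criterion-style conditions (I) or (II) fail for `D_e`, then one of the
graphical configurations (a), (b), (c) holds in `G`. -/
theorem statement_16 {V : Type} [Fintype V]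
    (G : Causal.Digraph V) (hG : G.Acyclic)
    (Y : V) (U : Set V) (hU : U ⊆ G.anSet Y)
    (D : Set V) (lD : List V) (hlD : G.IsTopoOrd D lD) (hlDne : lD ≠ [])
    (hDch : ∀ D' ∈ D, G.chSet D' ∩ G.anOf U ⊆ D)
    (S : Set V) (hSU : S ⊆ G.anOf U) (hSD : ∀ D' ∈ D, (G.deSet D' ∩ S).Nonempty)
    (Dv : V) (hDv : Dv ∈ D \ U)
    (l : List V) (hl : G.IsTopoOrd (G.chSet Dv ∩ D) l) (hlne : l ≠ [])
    (hcond :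
      (¬ G.dsep {Dv} S
          (insert (l.getD (l.length - 1) Dv) (G.paSet (l.getD (l.length - 1) Dv))
            \ {Dv})) ∨
      ∃ t, t < l.length ∧
        (¬ G.Edge (chainD Dv l t) (chainD Dv l (t + 1)) ∨
          ¬ G.paSet (chainD Dv l (t + 1)) ⊆
              insert (chainD Dv l t) (G.paSet (chainD Dv l t)) ∨
          ¬ G.dsep (G.paSet (chainD Dv l t) \ G.paSet (chainD Dv l (t + 1))) S
              (G.paSet (chainD Dv l (t + 1))))) :
    (∃ m, m < l.length ∧ ∃ h, h < l.length ∧ m ≠ h ∧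
      l.getD m Dv ∉ G.adjSet (l.getD h Dv)) ∨
    (∃ h, h < l.length ∧ ∃ B, B ≠ Dv ∧ G.Edge Dv (l.getD h Dv) ∧
      G.Edge B (l.getD h Dv) ∧ B ∉ G.adjSet Dv) ∨
    (∃ h, h < l.length ∧ ∃ B, B ∈ G.paSet Dv \ G.paSet (l.getD h Dv) ∧
      ∃ p : G.GPath, p.first = B ∧ p.last ∈ S ∧ ¬ p.Blocked (G.paSet (l.getD h Dv))) := by
  classical
  by_contra hcon
  push_neg at hcon
  obtain ⟨hna, hnb, hnc⟩ := hcon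
  set len := l.length with hlen_def
  have hlen : 0 < len := List.length_pos_iff.mpr hlne
  -- basic facts about the chain `l`
  have hmemi : ∀ i, i < len → l.getD i Dv ∈ G.chSet Dv ∩ D := fun i hi =>
    (hl.2.1 _).1 (Digraph.topo_getD_mem hi)
  have hEdgeDv : ∀ i, i < len → G.Edge Dv (l.getD i Dv) := fun i hi => (hmemi i hi).1
  have hiD : ∀ i, i < len → l.getD i Dv ∈ D := fun i hi => (hmemi i hi).2
  have hDanU : ∀ d ∈ D, d ∈ G.anOf U := by
    intro d hd
    obtain ⟨s, hs⟩ := hSD d hd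
    exact Digraph.anOf_closed hs.1 (hSU hs.2)
  have hneDv : ∀ i, i < len → l.getD i Dv ≠ Dv := fun i hi h =>
    hG.edge_irrefl (h ▸ hEdgeDv i hi)
  have hEdgeij : ∀ i j, i < j → j < len → G.Edge (l.getD i Dv) (l.getD j Dv) := by
    intro i j hij hj
    have hadj := hna i (by omega) j hj (by omega)
    simp only [Digraph.adjSet, Set.mem_union] at hadj
    rcases hadj with h | h
    · exact h
    · exact absurd (Relation.ReflTransGen.single h) (Digraph.topo_not_anc hl hij hj)
  have hidx : ∀ v, v ∈ G.chSet Dv ∩ D → ∃ i, i < len ∧ l.getD i Dv = v := by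
    intro v hv
    obtain ⟨i, hi, he⟩ := List.mem_iff_getElem.mp ((hl.2.1 v).mpr hv)
    exact ⟨i, hi, by rw [List.getD_eq_getElem l Dv hi]; exact he⟩
  have chain0 : chainD Dv l 0 = Dv := rfl
  have chainS : ∀ t, chainD Dv l (t + 1) = l.getD t Dv := fun t => rfl
  have chainPos : ∀ t, 0 < t → chainD Dv l t = l.getD (t - 1) Dv := by
    intro t ht
    conv_lhs => rw [show t = (t - 1) + 1 from by omega]
    exact chainS (t - 1)
  -- ===== KEY1 : conditions II(1) and II(2) hold =====
  have KEY1 : ∀ t, t < len → G.Edge (chainD Dv l t) (chainD Dv l (t + 1)) ∧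
      G.paSet (chainD Dv l (t + 1)) ⊆ insert (chainD Dv l t) (G.paSet (chainD Dv l t)) := by
    intro t ht
    constructor
    · rcases Nat.eq_zero_or_pos t with h0 | h0
      · subst h0; rw [chain0, chainS]; exact hEdgeDv 0 ht
      · rw [chainPos t h0, chainS]
        exact hEdgeij (t - 1) t (by omega) ht
    · intro B hB
      rw [chainS] at hB
      by_contra hBc
      simp only [Set.mem_insert_iff, not_or] at hBc
      obtain ⟨hBne, hBpa⟩ := hBc
      have hBDv : B ≠ Dv := by
        intro h; subst h
        rcases Nat.eq_zero_or_pos t with h0 | h0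
        · exact hBne (by rw [h0, chain0])
        · exact hBpa (by rw [chainPos t h0]; exact hEdgeDv (t - 1) (by omega))
      have hBadj := hnb t ht B hBDv (hEdgeDv t ht) hB
      simp only [Digraph.adjSet, Set.mem_union] at hBadj
      rcases hBadj with hpa | hch
      · -- B → Dv : construct an unblocked path, contradicting ¬(c)
        rcases Nat.eq_zero_or_pos t with h0 | h0
        · subst h0; exact hBpa hpa
        · obtain ⟨s, hs⟩ := hSD (l.getD t Dv) (hiD t ht)
          obtain ⟨p0, hp0c, hp0f, hp0l⟩ := Digraph.exists_causal_gpath hs.1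
          have hp0f' : p0.vert 0 = l.getD t Dv := hp0f
          have hBnot : ∀ i, i ≤ p0.n → p0.vert i ≠ B := by
            intro i hi he
            have h1 : G.anc (l.getD t Dv) B := by
              rw [← hp0f', ← he]; exact p0.causal_anc_first hp0c hi
            exact hG B (Relation.TransGen.head' hB h1)
          have heB : G.Edge B (p0.vert 0) := by rw [hp0f']; exact hB
          have hqb : ¬ (p0.cons B hBnot heB).Blocked (G.paSet (l.getD (t-1) Dv)) := by
            apply Digraph.GPath.causal_not_blocked hG _ (p0.cons_causal B hBnot heB hp0c)
            intro i h0i hin hiC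
            have hv : (p0.cons B hBnot heB).vert i = p0.vert (i - 1) := by
              simp only [Digraph.GPath.cons, if_neg (by omega : ¬ i = 0)]
            rw [hv] at hiC
            have hanc : G.anc (l.getD t Dv) (p0.vert (i - 1)) := by
              rw [← hp0f']
              exact p0.causal_anc_first hp0c
                (by simp only [Digraph.GPath.cons] at hin; omega)
            have : G.anc (l.getD t Dv) (l.getD (t - 1) Dv) := hanc.tail hiC
            exact Digraph.topo_not_anc hl (show t - 1 < t from by omega) ht this
          apply hqb
          refine hnc (t - 1) (by omega) B ⟨hpa, by rw [chainPos t h0] at hBpa; exact hBpa⟩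
            (p0.cons B hBnot heB) (by simp [Digraph.GPath.cons, Digraph.GPath.first]) ?_
          show (p0.cons B hBnot heB).vert (p0.n + 1) ∈ S
          have : (p0.cons B hBnot heB).vert (p0.n + 1) = p0.vert p0.n := by
            simp only [Digraph.GPath.cons, if_neg (by omega : ¬ p0.n + 1 = 0),
              Nat.add_sub_cancel]
          rw [this]
          rw [show p0.vert p0.n = s from hp0l]
          exact hs.2
      · -- Dv → B : B is a chain element, contradiction
        have hBD : B ∈ D := hDch Dv hDv.1
          ⟨hch, Digraph.anOf_closed (Relation.ReflTransGen.single hB)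
            (hDanU _ (hiD t ht))⟩
        obtain ⟨j, hj, hjB⟩ := hidx B ⟨hch, hBD⟩
        have hjt : j < t := by
          rcases Nat.lt_trichotomy j t with h | h | h
          · exact h
          · exact absurd (hjB ▸ hB) (by subst h; rw [hjB]; exact fun he => hG.edge_irrefl he)
          · exact absurd (Relation.ReflTransGen.single (hjB ▸ hB))
              (Digraph.topo_not_anc hl h hj)
        have h0 : 0 < t := by omega
        rcases Nat.lt_trichotomy j (t - 1) with h | h | h
        · exact hBpa (by rw [chainPos t h0, ← hjB]; exact hEdgeij j (t - 1) h (by omega))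
        · exact hBne (by rw [chainPos t h0, ← hjB, h])
        · omega
  -- ===== KEY2 : parents of chain elements =====
  have KEY2 : ∀ t, t ≤ len → G.paSet (chainD Dv l t) ⊆
      G.paSet Dv ∪ {x | ∃ j, j < t ∧ x = chainD Dv l j} := by
    intro t
    induction t with
    | zero => intro _ x hx; exact Or.inl hx
    | succ m ih =>
      intro hm x hx
      have h1 := (KEY1 m (by omega)).2 hx
      rcases Set.mem_insert_iff.mp h1 with h | h
      · exact Or.inr ⟨m, by omega, h⟩
      · rcases ih (by omega) h with h' | ⟨j, hj, h''⟩
        · exact Or.inl h'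
        · exact Or.inr ⟨j, by omega, h''⟩
  -- ===== KEY3 : condition II(3) holds =====
  have KEY3 : ∀ t, t < len → G.dsep (G.paSet (chainD Dv l t) \ G.paSet (chainD Dv l (t + 1)))
      S (G.paSet (chainD Dv l (t + 1))) := by
    intro t ht b hb s hs p hn hf hla
    have hb1 : b ∈ G.paSet (chainD Dv l t) := hb.1.1
    have hb2 : b ∉ G.paSet (chainD Dv l (t + 1)) := hb.1.2
    have hbPaDv : b ∈ G.paSet Dv := by
      rcases KEY2 t (by omega) hb1 with h | ⟨j, hj, hbj⟩
      · exact h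
      · exfalso
        rcases Nat.eq_zero_or_pos j with h0 | h0
        · subst h0; rw [chain0] at hbj; subst hbj
          exact hb2 (by rw [chainS]; exact hEdgeDv t ht)
        · subst hbj
          apply hb2
          rw [chainS, chainPos j h0]
          exact hEdgeij (j - 1) t (by omega) ht
    have hb2' : b ∉ G.paSet (l.getD t Dv) := by rw [← chainS]; exact hb2
    exact hnc t ht b ⟨hbPaDv, hb2'⟩ p hf (by rw [hla]; exact hs.1)
  -- ===== KEY4 : condition (I) holds =====
  have KEY4 : G.dsep {Dv} S
      (insert (l.getD (len - 1) Dv) (G.paSet (l.getD (len - 1) Dv)) \ {Dv}) := by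
    set Df := l.getD (len - 1) Dv with hDf_def
    set C : Set V := insert Df (G.paSet Df) \ {Dv} with hC_def
    intro dv hdv s hs p hn hf hla
    have hdv' : dv = Dv := hdv.1
    rw [hdv'] at hf
    by_contra hnbl
    simp only [Digraph.GPath.Blocked, not_or] at hnbl
    push_neg at hnbl
    obtain ⟨hNC, hCol⟩ := hnbl
    have hflt : len - 1 < len := by omega
    have hEDf : G.Edge Dv Df := hEdgeDv (len - 1) hflt
    have hDfD : Df ∈ D := hiD (len - 1) hflt
    have hDfC : Df ∈ C := ⟨Set.mem_insert _ _, hneDv (len - 1) hflt⟩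
    have hf0 : p.vert 0 = Dv := hf
    have hla0 : p.vert p.n = s := hla
    have hsC : s ∉ C := hs.2
    -- Step A : `Df` does not lie on `p`
    have stepA : ∀ i, i ≤ p.n → p.vert i ≠ Df := by
      intro i hi he
      rcases Nat.eq_zero_or_pos i with h0 | h0
      · subst h0; rw [hf0] at he
        exact hG.ne_of_edge hEDf he
      rcases eq_or_lt_of_le hi with hN | hN
      · subst hN; rw [hla0] at he
        exact hsC (by rw [he]; exact hDfC)
      by_cases hcol : p.IsCollider i
      · have hw : G.Edge (p.vert (i + 1)) (p.vert i) := hcol.2.2.2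
        have hw' : G.Edge (p.vert (i + 1)) Df := by rw [← he]; exact hw
        have hwne : p.vert (i + 1) ≠ Dv := by
          intro hwv
          have := p.inj (i + 1) 0 (by omega) (by omega) (by rw [hwv, hf0])
          omega
        have hwC : p.vert (i + 1) ∈ C := ⟨Set.mem_insert_iff.mpr (Or.inr hw'), hwne⟩
        rcases eq_or_lt_of_le (show i + 1 ≤ p.n from by omega) with hN2 | hN2
        · rw [hN2, hla0] at hwC
          exact hsC hwC
        · have hncol : ¬ p.IsCollider (i + 1) := by
            intro hc2
            have h2 := hc2.2.2.1
            rw [Nat.add_sub_cancel] at h2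
            exact hG _ (Relation.TransGen.tail (Relation.TransGen.single h2) hw)
          exact hNC (i + 1) (by omega) hN2 hncol hwC
      · exact hNC i h0 hN hcol (by rw [he]; exact hDfC)
    -- ancestors of `C`
    have hCanc : ∀ c ∈ C, G.anc c Df := by
      intro c hc
      rcases Set.mem_insert_iff.mp hc.1 with h | h
      · exact h ▸ Relation.ReflTransGen.refl
      · exact Relation.ReflTransGen.single h
    have hanCU : ∀ x, x ∈ G.anOf C → x ∈ G.anOf U := by
      intro x hx
      obtain ⟨c, hc, hxc⟩ := Digraph.mem_anOf.mp hx
      exact Digraph.anOf_closed (hxc.trans (hCanc c hc)) (hDanU Df hDfD)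
    have hanCpa : ∀ x, x ∈ G.anOf C → x ≠ Df → x ∈ G.anOf (G.paSet Df) := by
      intro x hx hne
      obtain ⟨c, hc, hxc⟩ := Digraph.mem_anOf.mp hx
      have hxDf : G.anc x Df := hxc.trans (hCanc c hc)
      rcases Relation.ReflTransGen.cases_tail hxDf with h | ⟨b, hb1, hb2⟩
      · exact absurd h.symm hne
      · exact Digraph.mem_anOf.mpr ⟨b, hb2, hb1⟩
    -- dropped paths remain unblocked for the conditioning set `paSet Df`
    have keyDrop : ∀ k (hk1 : 1 ≤ k) (hk : k ≤ p.n),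
        ¬ (p.drop k hk).Blocked (G.paSet Df) := by
      intro k hk1 hk hbl
      rcases hbl with ⟨i, h1, h2, h3, h4⟩ | ⟨i, hcol, h4⟩
      · have h2' : i + k < p.n := by
          have : (p.drop k hk).n = p.n - k := rfl
          omega
        have hnc' : ¬ p.IsCollider (i + k) := fun hc =>
          h3 ((p.drop_isCollider k hk i h1).mpr hc)
        have h4' : p.vert (i + k) ∈ G.paSet Df := h4
        refine hNC (i + k) (by omega) h2' hnc'
          ⟨Set.mem_insert_iff.mpr (Or.inr h4'), ?_⟩
        intro hDv'
        have := p.inj (i + k) 0 (by omega) (by omega) (by rw [hDv', hf0])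
        omega
      · have h1 := hcol.1
        have hci : p.IsCollider (i + k) := (p.drop_isCollider k hk i h1).mp hcol
        have hmem := hCol (i + k) hci
        exact h4 (hanCpa _ hmem (stepA (i + k) (by have := hci.2.1; omega)))
    -- analyse the first edge of `p`
    by_cases hE1 : G.Edge Dv (p.vert 1)
    · -- `Dv → v₁` : `v₁` is a chain element and a collider, look at `v₂`
      have hfwd := p.forward_endpoint 1 one_pos hn
        (by rw [show (1:ℕ) - 1 = 0 from rfl, hf0]; exact hE1)
      have hv1U : p.vert 1 ∈ G.anOf U := by
        rcases hfwd with h | ⟨j, hj, h2⟩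
        · exact Digraph.anOf_closed (hla ▸ h) (hSU hs.1)
        · exact Digraph.anOf_closed h2 (hanCU _ (hCol j hj))
      have hv1D : p.vert 1 ∈ D := hDch Dv hDv.1 ⟨hE1, hv1U⟩
      obtain ⟨j, hj, hjv⟩ := hidx (p.vert 1) ⟨hE1, hv1D⟩
      have hjne : j ≠ len - 1 := by
        intro h
        exact stepA 1 hn (by rw [← hjv, h])
      have hv1Df : G.Edge (p.vert 1) Df := by
        rw [← hjv]; exact hEdgeij j (len - 1) (by omega) hflt
      have hv1C : p.vert 1 ∈ C :=
        ⟨Set.mem_insert_iff.mpr (Or.inr hv1Df), fun h => hG.ne_of_edge hE1 h.symm⟩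
      have h2n : 2 ≤ p.n := by
        rcases eq_or_lt_of_le hn with h | h
        · exfalso; apply hsC; rw [← hla0, ← h]; exact hv1C
        · omega
      have hcol1 : p.IsCollider 1 := by
        by_contra hncol
        exact hNC 1 one_pos (by omega) hncol hv1C
      have hE21 : G.Edge (p.vert 2) (p.vert 1) := hcol1.2.2.2
      have hv2ne : p.vert 2 ≠ Dv := by
        intro h
        have := p.inj 2 0 (by omega) (by omega) (by rw [h, hf0])
        omega
      have hv2adj := hnb j hj (p.vert 2) hv2ne (by rw [hjv]; exact hE1)
        (by rw [hjv]; exact hE21)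
      have hv2notC : p.vert 2 ∉ C := by
        intro hC2
        rcases eq_or_lt_of_le h2n with h2 | h2
        · apply hsC; rw [← hla0, ← h2]; exact hC2
        · refine hNC 2 (by omega) h2 ?_ hC2
          intro hc
          have h12 := hc.2.2.1
          rw [show (2:ℕ) - 1 = 1 from rfl] at h12
          exact hG _ (Relation.TransGen.tail (Relation.TransGen.single h12) hE21)
      simp only [Digraph.adjSet, Set.mem_union] at hv2adj
      rcases hv2adj with hpa2 | hch2
      · -- `v₂ → Dv` : conclude using configuration (c)
        have hv2pa : p.vert 2 ∉ G.paSet Df := fun hp =>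
          hv2notC ⟨Set.mem_insert_iff.mpr (Or.inr hp), hv2ne⟩
        apply keyDrop 2 (by omega) h2n
        refine hnc (len - 1) hflt (p.vert 2) ⟨hpa2, hv2pa⟩ (p.drop 2 h2n) rfl ?_
        show (p.drop 2 h2n).vert (p.n - 2) ∈ S
        have : (p.drop 2 h2n).vert (p.n - 2) = p.vert p.n := by
          show p.vert (p.n - 2 + 2) = p.vert p.n
          congr 1; omega
        rw [this, hla0]; exact hs.1
      · -- `Dv → v₂` : `v₂` is a chain element, contradiction
        have hv2U : p.vert 2 ∈ G.anOf U :=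
          Digraph.anOf_closed (Relation.ReflTransGen.single hE21) (hDanU _ hv1D)
        have hv2D : p.vert 2 ∈ D := hDch Dv hDv.1 ⟨hch2, hv2U⟩
        obtain ⟨j2, hj2, hjv2⟩ := hidx (p.vert 2) ⟨hch2, hv2D⟩
        have hj2ne : j2 ≠ len - 1 := by
          intro h
          exact stepA 2 h2n (by rw [← hjv2, h])
        have hv2Df : G.Edge (p.vert 2) Df := by
          rw [← hjv2]; exact hEdgeij j2 (len - 1) (by omega) hflt
        exact hv2notC ⟨Set.mem_insert_iff.mpr (Or.inr hv2Df), hv2ne⟩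
    · -- `v₁ → Dv` : conclude using configuration (c)
      have hE1' : G.Edge (p.vert 1) Dv := by
        rcases p.adj 0 (by omega) with h | h
        · rw [hf0] at h; exact absurd h hE1
        · rw [hf0] at h; exact h
      have hv1ne : p.vert 1 ≠ Dv := by
        intro h
        have := p.inj 1 0 (by omega) (by omega) (by rw [h, hf0])
        omega
      have hv1notC : p.vert 1 ∉ C := by
        intro hC1
        rcases eq_or_lt_of_le hn with h1n | h1n
        · apply hsC; rw [← hla0, ← h1n]; exact hC1
        · refine hNC 1 one_pos h1n ?_ hC1
          intro hc
          have h01 := hc.2.2.1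
          rw [show (1:ℕ) - 1 = 0 from rfl, hf0] at h01
          exact hE1 h01
      have hv1pa : p.vert 1 ∉ G.paSet Df := fun hp =>
        hv1notC ⟨Set.mem_insert_iff.mpr (Or.inr hp), hv1ne⟩
      apply keyDrop 1 le_rfl hn
      refine hnc (len - 1) hflt (p.vert 1) ⟨hE1', hv1pa⟩ (p.drop 1 hn) rfl ?_
      show (p.drop 1 hn).vert (p.n - 1) ∈ S
      have : (p.drop 1 hn).vert (p.n - 1) = p.vert p.n := by
        show p.vert (p.n - 1 + 1) = p.vert p.n
        congr 1; omega
      rw [this, hla0]; exact hs.1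
  -- ===== conclude =====
  rcases hcond with hI | ⟨t, ht, hII⟩
  · exact hI KEY4
  · rcases hII with h1 | h2 | h3
    · exact h1 (KEY1 t ht).1
    · exact h2 (KEY1 t ht).2
    · exact h3 (KEY3 t ht)
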